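/- arXiv:math/0603200 — 3 statements merged into one kernel-verified Lean document; each statement's English description precedes it below -/
import Mathlib

section
/- Let T be a commutative ring with an ideal I such that I/I² is finitely generated as a T/I-module, and let T̂ be the I-adic completion of T. If f₁,…,f_d ∈ I are lifts of generators of I/I², then the images of f₁,…,f_d in T̂ generate the ideal I·T̂; in particular T̂ is an adic ring with finitely generated ideal of definition I·T̂. -/
/-!
Let `K` be the ideal generated by the `f i`. From `K ≤ I ≤ K ⊔ I²` one gets `Iⁿ = Kⁿ + I·Iⁿ` for
every `n`, so a finite free module mapping onto generators of `Kⁿ` maps onto `Iⁿ` modulo `I·Iⁿ`;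
by successive approximation this map stays surjective after `I`-adic completion. Hence every
element of `T̂` vanishing in `T/Iⁿ` lies in `Kⁿ T̂ ⊆ Iⁿ T̂`. This identifies `I T̂` with `K T̂`, and
identifies the kernel of `T̂ → T/Iⁿ` with `Iⁿ T̂`, which is all that the usual proof of completeness
of `T̂` needs.
-/

open Submodule

theorem Ideal.pow_le_pow_sup_pow_succ {R : Type*} [CommSemiring R] {I K : Ideal R}
    (hKI : K ≤ I) (hIK : I ≤ K ⊔ I ^ 2) (n : ℕ) : I ^ n ≤ K ^ n ⊔ I ^ (n + 1) := by
  induction n with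
  | zero => simp
  | succ n ih =>
    calc I ^ (n + 1) = I ^ n * I := pow_succ I n
      _ ≤ (K ^ n ⊔ I ^ (n + 1)) * (K ⊔ I ^ 2) := Ideal.mul_mono ih hIK
      _ ≤ K ^ (n + 1) ⊔ I ^ (n + 2) := by
        rw [Ideal.sup_mul, Ideal.mul_sup, Ideal.mul_sup, ← pow_succ]
        refine sup_le (sup_le le_sup_left ?_) (sup_le ?_ ?_) <;> refine le_sup_of_le_right ?_
        · calc K ^ n * I ^ 2 ≤ I ^ n * I ^ 2 := Ideal.mul_mono_left (Ideal.pow_right_mono hKI n)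
            _ = I ^ (n + 2) := (pow_add I n 2).symm
        · calc I ^ (n + 1) * K ≤ I ^ (n + 1) * I := Ideal.mul_mono_right hKI
            _ = I ^ (n + 2) := (pow_succ I (n + 1)).symm
        · exact (pow_add I (n + 1) 2).symm.le.trans (Ideal.pow_le_pow_right (by omega))

namespace AdicCompletion

variable {R : Type*} [CommRing R] {I : Ideal R}

theorem map_fintypeLinearCombination {ι : Type*} [Fintype ι] (a : ι → R)
    (z : AdicCompletion I (ι → R)) :
    map I (Fintype.linearCombination R a) z =
      ∑ i, pi I (fun _ ↦ R) z i * algebraMap R _ (a i) := by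
  induction z using induction_on with
  | h c =>
    ext n
    simp [Fintype.linearCombination_apply, val_sum, val_mul, algebraMap_apply]
    rfl

theorem mem_map_of_val_eq_zero {n : ℕ} {K : Ideal R} (hK : K.FG) (hKI : K ≤ I ^ n)
    (hIK : I ^ n ≤ K ⊔ I ^ (n + 1)) {x : AdicCompletion I R} (hx : x.val n = 0) :
    x ∈ K.map (algebraMap R (AdicCompletion I R)) := by
  obtain ⟨s, rfl⟩ := hK
  let a : s → R := Subtype.val
  have hspan : span R (Set.range a) = Ideal.span s := by simp [a, Ideal.span]
  let g : (s → R) →ₗ[R] (I ^ n • ⊤ : Submodule R R) :=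
    (Fintype.linearCombination R a).codRestrict _ fun c ↦ by
      have : Fintype.linearCombination R a c ∈ Ideal.span (s : Set R) := by
        rw [← hspan, ← Fintype.range_linearCombination]; exact ⟨c, rfl⟩
      simpa using hKI this
  have hg : Function.Surjective (mkQ (I • ⊤) ∘ₗ g) := by
    refine fun y ↦ Submodule.Quotient.induction_on _ y fun y ↦ ?_
    obtain ⟨k, hk, r, hr, hy⟩ := mem_sup.mp (hIK (by simpa using y.2))
    rw [← hspan, ← Fintype.range_linearCombination] at hk
    obtain ⟨c, rfl⟩ := hk
    refine ⟨c, (Submodule.Quotient.eq _).mpr ?_⟩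
    have hdiff : ((g c - y : ↥(I ^ n • ⊤ : Submodule R R)) : R) = -r := by
      simp [g, ← hy]
    rw [mem_smul_top_iff, hdiff]
    simpa [← pow_succ'] using neg_mem hr
  obtain ⟨z, hz⟩ := map_surjective_of_mkQ_comp_surjective hg (ofValEqZero I hx)
  have hxz : x = map I (Fintype.linearCombination R a) z := by
    rw [← ofPowSMul_ofValEqZero I hx, ← hz, map_comp_apply]
    rfl
  rw [hxz, map_fintypeLinearCombination]
  exact sum_mem fun i _ ↦ Ideal.mul_mem_left _ _ (Ideal.mem_map_of_mem _ (Ideal.subset_span i.2))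

theorem isAdicComplete_of_ker_eval_le {M : Type*} [AddCommGroup M] [Module R M]
    (h : ∀ n, LinearMap.ker (eval I M n) ≤ I ^ n • ⊤) : IsAdicComplete I (AdicCompletion I M) where
  prec' x hx := by
    have hker (n : ℕ) : I ^ n • ⊤ = LinearMap.ker (eval I M n) :=
      le_antisymm (pow_smul_top_le_ker_eval ..) (h n)
    let L : AdicCompletion I M :=
      { val i := (x i).val i
        property {m n} hmn := by
          simp only [transitionMap_comp_eval_apply]
          specialize hx hmn
          rwa [SModEq.sub_mem, hker, LinearMap.mem_ker, map_sub,
            sub_eq_zero, eval_apply, eval_apply, eq_comm] at hx }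
    refine ⟨L, fun i ↦ ?_⟩
    rw [SModEq.sub_mem, hker, LinearMap.mem_ker, eval_apply, val_sub]
    exact sub_self _

end AdicCompletion

/-- If `I/I²` is finitely generated, with `f₁,…,f_d ∈ I` lifting generators of `I/I²`, then the
images of the `f i` in the `I`-adic completion `T̂` generate the ideal `I·T̂`; in particular `T̂`
is adic (complete and separated) with the finitely generated ideal of definition `I·T̂`. -/
theorem stmt1 {T : Type*} [CommRing T] (I : Ideal T) (d : ℕ) (f : Fin d → T)
    (hf : ∀ i, f i ∈ I)
    (hgen : I ≤ Ideal.span (Set.range f) ⊔ I ^ 2) :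
    Ideal.map (algebraMap T (AdicCompletion I T)) I =
      Ideal.span (Set.range fun i => algebraMap T (AdicCompletion I T) (f i)) ∧
    IsAdicComplete (Ideal.map (algebraMap T (AdicCompletion I T)) I) (AdicCompletion I T) := by
  set K := Ideal.span (Set.range f)
  have hKI : K ≤ I := Ideal.span_le.mpr (Set.range_subset_iff.mpr hf)
  have hker (n : ℕ) (x : AdicCompletion I T) (hx : x ∈ LinearMap.ker (AdicCompletion.eval I T n)) :
      x ∈ (K ^ n).map (algebraMap T (AdicCompletion I T)) :=
    AdicCompletion.mem_map_of_val_eq_zero (Ideal.FG.pow (Submodule.fg_span (Set.finite_range f)))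
      (Ideal.pow_right_mono hKI n) (Ideal.pow_le_pow_sup_pow_succ hKI hgen n) hx
  refine ⟨le_antisymm (fun x hx ↦ ?_) ?_, ?_⟩
  · have hx₁ := hker 1 x <| AdicCompletion.pow_smul_top_le_ker_eval I 1 <| by
      rwa [pow_one, Ideal.smul_top_eq_map]
    rwa [pow_one, Ideal.map_span, ← Set.range_comp] at hx₁
  · rw [Ideal.span_le]
    rintro _ ⟨i, rfl⟩
    exact Ideal.mem_map_of_mem _ (hf i)
  · rw [IsAdicComplete.map_algebraMap_iff]
    refine AdicCompletion.isAdicComplete_of_ker_eval_le fun n x hx ↦ ?_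
    rw [Ideal.smul_top_eq_map]
    exact Ideal.map_mono (Ideal.pow_right_mono hKI n) (hker n x hx)
end

section
/- Let T be a commutative ring with a finitely generated ideal I, M a T-module, and let M̂, T̂ denote I-adic completions. Then the canonical map M/IⁿM → M̂/IⁿM̂ is an isomorphism for every n ≥ 1. -/
/-! Since `I` is finitely generated, `IⁿM̂` is exactly the kernel of the projection
`M̂ → M/IⁿM` (`AdicCompletion.pow_smul_top_eq_ker_eval`), so `M̂/IⁿM̂ ≅ M/IⁿM`, and under this
identification `M → M̂/IⁿM̂` becomes the quotient map `M → M/IⁿM`. -/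

namespace LinearMap

variable {R M N P : Type*} [Ring R] [AddCommGroup M] [Module R M]
  [AddCommGroup N] [Module R N] [AddCommGroup P] [Module R P]

theorem ker_mkQ_ker_comp (f : M →ₗ[R] N) (g : N →ₗ[R] P) :
    ker ((ker g).mkQ ∘ₗ f) = ker (g ∘ₗ f) := by
  rw [ker_comp, Submodule.ker_mkQ, ker_comp]

theorem mkQ_ker_comp_surjective {f : M →ₗ[R] N} {g : N →ₗ[R] P}
    (h : Function.Surjective (g ∘ₗ f)) : Function.Surjective ((ker g).mkQ ∘ₗ f) := by
  intro y
  obtain ⟨y, rfl⟩ := Submodule.mkQ_surjective _ y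
  obtain ⟨x, hx⟩ := h (g y)
  refine ⟨x, (Submodule.Quotient.eq _).2 (mem_ker.2 ?_)⟩
  rw [map_sub, ← comp_apply, hx, sub_self]

end LinearMap

theorem stmt2_general {T : Type*} [CommRing T] (I : Ideal T) (hI : I.FG)
    (M : Type*) [AddCommGroup M] [Module T M] (n : ℕ) :
    Function.Surjective
      ((Submodule.mkQ (I ^ n • ⊤ : Submodule T (AdicCompletion I M))).comp
        (AdicCompletion.of I M)) ∧
    LinearMap.ker ((Submodule.mkQ (I ^ n • ⊤ : Submodule T (AdicCompletion I M))).comp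
        (AdicCompletion.of I M)) = (I ^ n • ⊤ : Submodule T M) := by
  rw [AdicCompletion.pow_smul_top_eq_ker_eval (M := M) hI]
  exact ⟨LinearMap.mkQ_ker_comp_surjective <| by
      simpa only [AdicCompletion.eval_comp_of] using Submodule.mkQ_surjective _,
    by rw [LinearMap.ker_mkQ_ker_comp, AdicCompletion.eval_comp_of, Submodule.ker_mkQ]⟩

/-- For a finitely generated ideal `I` of `T` and a `T`-module `M`, the canonical map
`M/IⁿM → M̂/IⁿM̂` into the `I`-adic completion is an isomorphism for every `n ≥ 1`:
equivalently, the composite `M → M̂ → M̂/IⁿM̂` is surjective with kernel `IⁿM`. -/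
theorem stmt2 {T : Type*} [CommRing T] (I : Ideal T) (hI : I.FG)
    (M : Type*) [AddCommGroup M] [Module T M] (n : ℕ) (hn : 1 ≤ n) :
    Function.Surjective
      ((Submodule.mkQ (I ^ n • ⊤ : Submodule T (AdicCompletion I M))).comp
        (AdicCompletion.of I M)) ∧
    LinearMap.ker ((Submodule.mkQ (I ^ n • ⊤ : Submodule T (AdicCompletion I M))).comp
        (AdicCompletion.of I M)) = (I ^ n • ⊤ : Submodule T M) :=
  stmt2_general I hI M n
end

section
/- Let T = k[x₁,x₂,…] be a polynomial ring over a field k in countably many variables, I = (x₁,x₂,…), and T̂ the I-adic completion. Then the element x₁ + x₂x₃ + x₄x₅x₆ + ⋯ (the sum over n of the product x_{m_n+1}⋯x_{m_n+n} where the indices are consecutive and disjoint) lies in the closure Î of I·T̂ but not in the ideal of T̂ generated by x₁,x₂,…; in particular I·T̂ ≠ Î. -/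
/-!
Write `ξ = x₀ + x₁x₂ + x₃x₄x₅ + ⋯`, the `n`-th summand being a monomial of degree `n + 1`,
so that `ξ` is `I`-adically Cauchy and its first truncation vanishes. If `ξ` were in the
ideal generated by the variables, it would lie in the ideal generated by finitely many of
them, say `x_i` with `i < m`. Truncating modulo `I ^ (m + 2)` gives a polynomial
`q ∈ (x_i : i < m)` agreeing with the partial sum in all degrees `≤ m + 1`; but the
`m`-th block `x_{m(m+1)/2} ⋯ x_{m(m+1)/2 + m}` has coefficient `1` in the partial sum, while
it involves no `x_i` with `i < m` and so has coefficient `0` in `q`.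
-/

open MvPolynomial

theorem Ideal.exists_mem_span_image_Iio_of_mem_span_range {S : Type*} [Semiring S]
    {f : ℕ → S} {x : S} (hx : x ∈ Ideal.span (Set.range f)) :
    ∃ m, x ∈ Ideal.span (f '' Set.Iio m) := by
  have hmono : Monotone fun m : ℕ => Ideal.span (f '' Set.Iio m) := fun a b hab =>
    Ideal.span_mono (Set.image_mono (Set.Iio_subset_Iio hab))
  rw [← Set.image_univ, ← Set.iUnion_Iio, Set.image_iUnion, Ideal.span_iUnion] at hx
  exact (Submodule.mem_iSup_of_directed _ hmono.directed_le).mp hx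

namespace AdicCompletion

variable {R : Type*} [CommRing R] {I : Ideal R}

theorem isAdicCauchy_sum_range {a : ℕ → R} (ha : ∀ n, a n ∈ I ^ n) :
    IsAdicCauchy I R fun N => ∑ n ∈ Finset.range N, a n := by
  rw [isAdicCauchy_iff]
  intro n
  rw [SModEq.comm, SModEq.sub_mem, Finset.sum_range_succ_sub_sum, smul_eq_mul, Ideal.mul_top]
  exact ha n

theorem exists_mem_sub_mem_pow_of_mk_mem_map {J : Ideal R} {f : AdicCauchySequence I R}
    (hf : mk I R f ∈ J.map (algebraMap R (AdicCompletion I R))) (n : ℕ) :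
    ∃ q ∈ J, f.val n - q ∈ I ^ n := by
  have hcomp : (evalₐ I n).toRingHom.comp (algebraMap R (AdicCompletion I R)) =
      Ideal.Quotient.mk (I ^ n) := by
    ext x
    simp
  have h := Ideal.mem_map_of_mem (evalₐ I n).toRingHom hf
  rw [Ideal.map_map, hcomp, Ideal.mem_map_iff_of_surjective _ Ideal.Quotient.mk_surjective] at h
  obtain ⟨q, hqJ, hq⟩ := h
  refine ⟨q, hqJ, Ideal.Quotient.eq.mp ?_⟩
  simpa using hq.symm

end AdicCompletion

namespace MvPolynomial

open Finsupp

/-- The exponent of the block `x_{T n} x_{T n + 1} ⋯ x_{T n + n}`, where `T n = n(n+1)/2`. -/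
noncomputable def blockExponent (n : ℕ) : ℕ →₀ ℕ :=
  ∑ j ∈ Finset.range (n + 1), single (n * (n + 1) / 2 + j) 1

theorem degree_blockExponent (n : ℕ) : degree (blockExponent n) = n + 1 := by
  simp [blockExponent, map_sum]

theorem blockExponent_injective : Function.Injective blockExponent := fun m n h => by
  simpa [degree_blockExponent] using congrArg degree h

theorem blockExponent_apply_of_lt {n i : ℕ} (hi : i < n * (n + 1) / 2) :
    blockExponent n i = 0 := by
  simp only [blockExponent, Finsupp.finsetSum_apply]
  exact Finset.sum_eq_zero fun j _ => single_eq_of_ne (by omega)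

section CommSemiring

variable (R : Type*) [CommSemiring R]

noncomputable def blockSum (N : ℕ) : MvPolynomial ℕ R :=
  ∑ n ∈ Finset.range N, ∏ j ∈ Finset.range (n + 1), X (n * (n + 1) / 2 + j)

theorem blockSum_eq :
    blockSum R = fun N => ∑ n ∈ Finset.range N, monomial (blockExponent n) (1 : R) := by
  ext1 N
  simp only [blockSum, blockExponent, monomial_sum_one, X]

theorem coeff_blockExponent_blockSum {m N : ℕ} (hm : m < N) :
    coeff (blockExponent m) (blockSum R N) = 1 := by
  rw [blockSum_eq, coeff_sum, Finset.sum_eq_single_of_mem m (Finset.mem_range.mpr hm)]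
  · simp
  · intro n _ hnm
    rw [coeff_monomial, if_neg (blockExponent_injective.ne hnm)]

theorem monomial_blockExponent_mem_pow (n : ℕ) :
    monomial (blockExponent n) (1 : R) ∈ idealOfVars ℕ R ^ n := by
  rw [mem_pow_idealOfVars_iff]
  intro x hx
  rw [Finset.mem_singleton.mp (support_monomial_subset hx), degree_blockExponent]
  omega

end CommSemiring

variable (R : Type*) [CommRing R]

noncomputable def blockSeries :
    AdicCompletion.AdicCauchySequence (idealOfVars ℕ R) (MvPolynomial ℕ R) :=
  ⟨blockSum R, by
    rw [blockSum_eq]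
    exact AdicCompletion.isAdicCauchy_sum_range (monomial_blockExponent_mem_pow R)⟩

theorem mk_blockSeries_notMem_map_span_X_image_Iio [Nontrivial R] (m : ℕ) :
    AdicCompletion.mk (idealOfVars ℕ R) (MvPolynomial ℕ R) (blockSeries R) ∉
      (Ideal.span (X '' Set.Iio m : Set (MvPolynomial ℕ R))).map
        (algebraMap _ (AdicCompletion (idealOfVars ℕ R) (MvPolynomial ℕ R))) := by
  intro h
  obtain ⟨q, hq, hdiff⟩ := AdicCompletion.exists_mem_sub_mem_pow_of_mk_mem_map h (m + 2)
  have hcoeff_q : coeff (blockExponent m) q = 0 := by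
    by_contra hne
    obtain ⟨i, hi, hne'⟩ := mem_ideal_span_X_image.mp hq _ (mem_support_iff.mpr hne)
    refine hne' (blockExponent_apply_of_lt ?_)
    have hm : m ≤ m * (m + 1) / 2 := (Nat.le_div_iff_mul_le two_pos).mpr <| by
      rcases Nat.eq_zero_or_pos m with rfl | _ <;> nlinarith
    exact (Set.mem_Iio.mp hi).trans_le hm
  have := (mem_pow_idealOfVars_iff' _ _).mp hdiff (blockExponent m)
    (by rw [degree_blockExponent]; omega)
  rw [coeff_sub, hcoeff_q, blockSeries, coeff_blockExponent_blockSum R (by omega)] at this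
  simp at this

end MvPolynomial

/-- In the `I`-adic completion `T̂` of `T = k[x₀,x₁,…]` at `I = (x₀,x₁,…)`, the element
`x₀ + x₁x₂ + x₃x₄x₅ + ⋯` (with partial sums `partialSum`) lies in the closure
`Î = ker(T̂ → T/I)` of `I·T̂`, but not in the ideal of `T̂` generated by the variables;
in particular `I·T̂ ≠ Î`. -/
theorem stmt3 (k : Type) [Field k] (I : Ideal (MvPolynomial ℕ k))
    (hI : I = Ideal.span (Set.range (X : ℕ → MvPolynomial ℕ k)))
    (partialSum : ℕ → MvPolynomial ℕ k)
    (hpart : partialSum = fun N => ∑ n ∈ Finset.range N,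
        ∏ j ∈ Finset.range (n + 1), X (n * (n + 1) / 2 + j)) :
    ∃ ξ : AdicCompletion I (MvPolynomial ℕ k),
      (∀ n : ℕ, ξ.val n = Submodule.Quotient.mk (partialSum n)) ∧
      ξ.val 1 = 0 ∧
      ξ ∉ Ideal.span (Set.range fun i : ℕ =>
        algebraMap (MvPolynomial ℕ k) (AdicCompletion I (MvPolynomial ℕ k)) (X i)) ∧
      ((Ideal.map (algebraMap (MvPolynomial ℕ k) (AdicCompletion I (MvPolynomial ℕ k))) I :
          Set (AdicCompletion I (MvPolynomial ℕ k))) ≠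
        {x : AdicCompletion I (MvPolynomial ℕ k) | x.val 1 = 0}) := by
  subst hI
  obtain rfl : partialSum = blockSum k := hpart
  set ξ := AdicCompletion.mk _ _ (blockSeries k)
  have hξ₁ : ξ.val 1 = 0 := by
    change Submodule.Quotient.mk (blockSum k 1) = 0
    rw [Submodule.Quotient.mk_eq_zero, smul_eq_mul, Ideal.mul_top, pow_one]
    simpa [blockSum] using (Ideal.subset_span (Set.mem_range_self 0) : X 0 ∈ idealOfVars ℕ k)
  have hmap : (idealOfVars ℕ k).map
        (algebraMap (MvPolynomial ℕ k) (AdicCompletion (idealOfVars ℕ k) (MvPolynomial ℕ k))) =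
      Ideal.span (Set.range fun i : ℕ => algebraMap (MvPolynomial ℕ k)
        (AdicCompletion (idealOfVars ℕ k) (MvPolynomial ℕ k)) (X i)) := by
    rw [Ideal.map_span, ← Set.range_comp]
    rfl
  have hξ : ξ ∉ (idealOfVars ℕ k).map (algebraMap _ _) := by
    rw [hmap]
    intro h
    obtain ⟨m, hm⟩ := Ideal.exists_mem_span_image_Iio_of_mem_span_range h
    rw [← Set.image_image, ← Ideal.map_span] at hm
    exact mk_blockSeries_notMem_map_span_X_image_Iio k m hm
  refine ⟨ξ, fun n => rfl, hξ₁, hmap ▸ hξ, fun h => hξ ?_⟩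
  rw [← SetLike.mem_coe, h]
  exact hξ₁
end
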